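/- Let Ω ⊆ ℂⁿ be a bounded domain with C² boundary and C² defining function ρ. Suppose there exists a number δ₀ > 0 such that, whenever ψ : D̄ → ℂⁿ is a closed analytic disc whose image ψ(D̄) has diameter less than δ₀ and whose boundary satisfies ψ(∂D) ⊆ Ω, then ψ(D̄) ⊆ Ω. Then Ω is Levi pseudoconvex, i.e. for every P ∈ ∂Ω and every complex tangent vector ξ at P one has ∑_{j,k=1}^n (∂²ρ/∂z_j∂z̄_k)(P) ξ_j ξ̄_k ≥ 0. -/

import Mathlib

open Complex Metric Set

/-- The Wirtinger derivative `∂ρ/∂z_j (P) = (1/2)(∂ρ/∂x_j − i ∂ρ/∂y_j)(P)` of a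
real-valued function `ρ` on `ℂⁿ`. -/
noncomputable def wirtingerDeriv {n : ℕ} (ρ : EuclideanSpace ℂ (Fin n) → ℝ)
    (P : EuclideanSpace ℂ (Fin n)) (j : Fin n) : ℂ :=
  (1 / 2 : ℂ) * (((fderiv ℝ ρ P (EuclideanSpace.single j 1) : ℝ) : ℂ)
    - Complex.I * ((fderiv ℝ ρ P (EuclideanSpace.single j Complex.I) : ℝ) : ℂ))

/-- The real second derivative (Hessian) of `ρ` at `P`, in directions `v`, `w`. -/
noncomputable def realHessian {n : ℕ} (ρ : EuclideanSpace ℂ (Fin n) → ℝ)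
    (P v w : EuclideanSpace ℂ (Fin n)) : ℝ :=
  fderiv ℝ (fun z => fderiv ℝ ρ z w) P v

/-- The mixed complex second derivative
`∂²ρ/∂z_j ∂z̄_k (P) = (1/4)[ρ_{x_j x_k} + ρ_{y_j y_k} + i (ρ_{x_j y_k} − ρ_{y_j x_k})]`. -/
noncomputable def leviCoeff {n : ℕ} (ρ : EuclideanSpace ℂ (Fin n) → ℝ)
    (P : EuclideanSpace ℂ (Fin n)) (j k : Fin n) : ℂ :=
  (1 / 4 : ℂ) *
    (((realHessian ρ P (EuclideanSpace.single j 1) (EuclideanSpace.single k 1) : ℝ) : ℂ)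
      + ((realHessian ρ P (EuclideanSpace.single j Complex.I)
            (EuclideanSpace.single k Complex.I) : ℝ) : ℂ)
      + Complex.I *
        (((realHessian ρ P (EuclideanSpace.single j 1)
            (EuclideanSpace.single k Complex.I) : ℝ) : ℂ)
          - ((realHessian ρ P (EuclideanSpace.single j Complex.I)
              (EuclideanSpace.single k 1) : ℝ) : ℂ)))

section Aux
variable {n : ℕ}

theorem euclid_decomp (v : EuclideanSpace ℂ (Fin n)) :
    v = ∑ j, ((v j).re • EuclideanSpace.single j (1:ℂ) + (v j).im • EuclideanSpace.single j Complex.I) := by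
  ext k
  rw [show (∑ j, ((v j).re • EuclideanSpace.single j (1:ℂ) + (v j).im • EuclideanSpace.single j Complex.I)) k
      = ∑ j, ((v j).re • EuclideanSpace.single j (1:ℂ) + (v j).im • EuclideanSpace.single j Complex.I) k
      from by rw [WithLp.ofLp_sum, Finset.sum_apply]]
  rw [Finset.sum_eq_single k]
  · simp [EuclideanSpace.single_apply, Complex.real_smul]
  · intro b _ hb
    simp [EuclideanSpace.single_apply, hb.symm, Complex.real_smul]
  · simp

theorem clm_decomp {F : Type*} [NormedAddCommGroup F] [NormedSpace ℝ F]
    (L : EuclideanSpace ℂ (Fin n) →L[ℝ] F) (v : EuclideanSpace ℂ (Fin n)) :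
    L v = ∑ j, ((v j).re • L (EuclideanSpace.single j (1:ℂ)) + (v j).im • L (EuclideanSpace.single j Complex.I)) := by
  conv_lhs => rw [euclid_decomp v]
  rw [map_sum]
  simp

theorem smul_decomp (z : ℂ) (v : EuclideanSpace ℂ (Fin n)) :
    z • v = z.re • v + z.im • (Complex.I • v) := by
  conv_lhs => rw [← Complex.re_add_im z]
  ext k
  simp only [PiLp.smul_apply, PiLp.add_apply, Complex.real_smul, smul_eq_mul]
  ring

theorem single_I (j : Fin n) :
    Complex.I • EuclideanSpace.single j (1:ℂ) = EuclideanSpace.single j Complex.I := by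
  ext k
  simp [PiLp.smul_apply, EuclideanSpace.single_apply]

theorem curve_deriv (P ξ τ : EuclideanSpace ℂ (Fin n)) (lam : ℂ) (s : ℝ) :
    HasDerivAt (fun s : ℝ => P + ((s:ℂ)*lam) • ξ + (((s:ℂ)*lam)*((s:ℂ)*lam)) • τ)
      (lam • ξ + ((2*(s:ℂ))*(lam*lam)) • τ) s := by
  have h1 : HasDerivAt (fun s : ℝ => (s:ℂ)*lam) lam s := by
    simpa using (Complex.ofRealCLM.hasDerivAt (x := s)).mul_const lam
  have h3 : HasDerivAt (fun s : ℝ => ((s:ℂ)*lam) • ξ) (lam • ξ) s :=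
    HasDerivAt.smul_const h1 ξ
  have h4 := (h3.const_add P).add ((h1.mul h1).smul_const τ)
  rw [show (2*(s:ℂ))*(lam*lam) = lam * ((s:ℂ) * lam) + (s:ℂ) * lam * lam by ring]
  exact h4

theorem dir_deriv (ξ τ : EuclideanSpace ℂ (Fin n)) (lam : ℂ) (s : ℝ) :
    HasDerivAt (fun s : ℝ => lam • ξ + ((2*(s:ℂ))*(lam*lam)) • τ)
      ((2*(lam*lam)) • τ) s := by
  have h1 : HasDerivAt (fun s : ℝ => 2*(s:ℂ)) 2 s := by
    simpa using (Complex.ofRealCLM.hasDerivAt (x := s)).const_mul (2:ℂ)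
  have h2 := (h1.mul_const (lam*lam)).smul_const τ
  simpa using h2.const_add (lam • ξ)

theorem norm_bound {n : ℕ} (ξ τ : EuclideanSpace ℂ (Fin n)) (t r C : ℝ)
    (ht0 : 0 < t) (ht1 : t ≤ 1) (hC : C = ‖ξ‖ + ‖τ‖ + 1) (htC : t * C ≤ r / 2)
    (hr0 : 0 < r) (lam : ℂ) (hl : ‖lam‖ ≤ 1) :
    ‖((t:ℂ)*lam) • ξ + (((t:ℂ)*lam)*((t:ℂ)*lam)) • τ‖ < r := by
  have h1 : ‖(t:ℂ)*lam‖ ≤ t := by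
    rw [norm_mul, Complex.norm_real, Real.norm_eq_abs, _root_.abs_of_nonneg ht0.le]
    exact mul_le_of_le_one_right ht0.le hl
  have h2 : ‖((t:ℂ)*lam) • ξ + (((t:ℂ)*lam)*((t:ℂ)*lam)) • τ‖
      ≤ ‖(t:ℂ)*lam‖ * ‖ξ‖ + ‖(t:ℂ)*lam‖ * ‖(t:ℂ)*lam‖ * ‖τ‖ := by
    calc ‖((t:ℂ)*lam) • ξ + (((t:ℂ)*lam)*((t:ℂ)*lam)) • τ‖
        ≤ ‖((t:ℂ)*lam) • ξ‖ + ‖(((t:ℂ)*lam)*((t:ℂ)*lam)) • τ‖ := norm_add_le _ _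
      _ = ‖(t:ℂ)*lam‖ * ‖ξ‖ + ‖(t:ℂ)*lam‖ * ‖(t:ℂ)*lam‖ * ‖τ‖ := by
          simp only [norm_smul, norm_mul]
  have h3 : ‖(t:ℂ)*lam‖ * ‖ξ‖ ≤ t * ‖ξ‖ := mul_le_mul_of_nonneg_right h1 (norm_nonneg _)
  have h4 : ‖(t:ℂ)*lam‖ * ‖(t:ℂ)*lam‖ * ‖τ‖ ≤ t * t * ‖τ‖ :=
    mul_le_mul_of_nonneg_right (mul_le_mul h1 h1 (norm_nonneg _) ht0.le) (norm_nonneg τ)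
  have htt : t * t ≤ t := by
    calc t * t ≤ t * 1 := mul_le_mul_of_nonneg_left ht1 ht0.le
      _ = t := mul_one t
  have h5 : t * t * ‖τ‖ ≤ t * ‖τ‖ := mul_le_mul_of_nonneg_right htt (norm_nonneg τ)
  have h6 : t * ‖ξ‖ + t * ‖τ‖ + t = t * C := by rw [hC]; ring
  linarith

end Aux

set_option maxHeartbeats 16000000 in
/-- **Proposition 1.** Let `Ω ⊆ ℂⁿ` be a bounded domain with `C²` boundary and `C²`
defining function `ρ`.  If there is `δ₀ > 0` such that every closed analytic disc of
diameter `< δ₀` whose boundary lies in `Ω` has its whole image in `Ω`, then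
`Ω` is Levi pseudoconvex: for every `P ∈ ∂Ω` and every complex tangent vector `ξ` at
`P`, `∑_{j,k} ∂²ρ/∂z_j∂z̄_k (P) ξ_j ξ̄_k ≥ 0`. -/


theorem levi_pseudoconvex_of_analytic_discs_boundary_in_domain
    {n : ℕ} (Ω U : Set (EuclideanSpace ℂ (Fin n)))
    (ρ : EuclideanSpace ℂ (Fin n) → ℝ)
    (hΩopen : IsOpen Ω) (hΩconn : IsConnected Ω) (hΩbdd : Bornology.IsBounded Ω)
    (hUopen : IsOpen U) (hUnbhd : frontier Ω ⊆ U)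
    (hρC2 : ContDiff ℝ 2 ρ)
    (hdef : Ω ∩ U = {z | z ∈ U ∧ ρ z < 0})
    (hgrad : ∀ z ∈ frontier Ω, fderiv ℝ ρ z ≠ 0)
    (hdisc : ∃ δ₀ > (0 : ℝ), ∀ ψ : ℂ → EuclideanSpace ℂ (Fin n),
      ContinuousOn ψ (closedBall 0 1) → DifferentiableOn ℂ ψ (ball 0 1) →
      diam (ψ '' closedBall 0 1) < δ₀ →
      ψ '' sphere 0 1 ⊆ Ω →
      ψ '' closedBall 0 1 ⊆ Ω) :
    ∀ P ∈ frontier Ω, ∀ ξ : EuclideanSpace ℂ (Fin n),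
      (∑ j, wirtingerDeriv ρ P j * ξ j) = 0 →
      0 ≤ (∑ j, ∑ k, leviCoeff ρ P j k * ξ j * (starRingEnd ℂ) (ξ k)).re := by
  intro P hP ξ htan
  by_contra hneg
  push_neg at hneg
  obtain ⟨δ₀, hδ₀, hdisc⟩ := hdisc
  -- basic facts
  have hPU : P ∈ U := hUnbhd hP
  have hPnotΩ : P ∉ Ω := fun h => hP.2 (by rwa [hΩopen.interior_eq])
  have hsub : ∀ z, z ∈ U → ρ z < 0 → z ∈ Ω := fun z h1 h2 =>
    (show z ∈ Ω ∩ U by rw [hdef]; exact ⟨h1, h2⟩).1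
  have hρdiff : Differentiable ℝ ρ := hρC2.differentiable (by norm_num)
  have hf'diff : Differentiable ℝ (fderiv ℝ ρ) :=
    (hρC2.fderiv_right (m := 1) (by norm_num)).differentiable (by norm_num)
  have hf'cont : Continuous (fderiv ℝ ρ) := hρC2.continuous_fderiv (by norm_num)
  have hBcont : Continuous (fderiv ℝ (fderiv ℝ ρ)) :=
    (hρC2.fderiv_right (m := 1) (by norm_num)).continuous_fderiv (by norm_num)
  have hρP : ρ P = 0 := by
    have hle : ρ P ≤ 0 := by
      have hne : (nhdsWithin P Ω).NeBot := mem_closure_iff_nhdsWithin_neBot.mp hP.1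
      have hev' : ∀ᶠ z in nhdsWithin P Ω, ρ z ≤ 0 := by
        have hU' : ∀ᶠ z in nhdsWithin P Ω, z ∈ U :=
          Filter.Eventually.filter_mono nhdsWithin_le_nhds (hUopen.mem_nhds hPU)
        have hΩ' : ∀ᶠ z in nhdsWithin P Ω, z ∈ Ω := eventually_mem_nhdsWithin
        filter_upwards [hU', hΩ'] with z h1 h2
        have hz : z ∈ Ω ∩ U := ⟨h2, h1⟩
        rw [hdef] at hz
        exact hz.2.le
      exact le_of_tendsto (hρC2.continuous.continuousAt.continuousWithinAt) hev'
    rcases lt_or_eq_of_le hle with h | h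
    · exact absurd (hsub P hPU h) hPnotΩ
    · exact h
  -- notation
  set B : EuclideanSpace ℂ (Fin n) →L[ℝ] EuclideanSpace ℂ (Fin n) →L[ℝ] ℝ :=
    fderiv ℝ (fderiv ℝ ρ) P with hBdef
  have hHess : ∀ v w, realHessian ρ P v w = B v w := by
    intro v w
    have hdf : DifferentiableAt ℝ (fderiv ℝ ρ) P := hf'diff P
    have heq : (fun z => fderiv ℝ ρ z w) = (⇑(ContinuousLinearMap.apply ℝ ℝ w)) ∘ (fderiv ℝ ρ) := rfl
    rw [realHessian, heq, fderiv_comp P (ContinuousLinearMap.apply ℝ ℝ w).differentiableAt hdf]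
    simp [ContinuousLinearMap.apply, hBdef]
  have hsymm : ∀ v w, B v w = B w v := by
    intro v w
    apply second_derivative_symmetric (f := ρ) (f' := fderiv ℝ ρ)
    · intro y
      exact (hρdiff y).hasFDerivAt
    · exact (hf'diff P).hasFDerivAt
  set rx : Fin n → ℝ := fun j => fderiv ℝ ρ P (EuclideanSpace.single j 1) with hrx
  set ry : Fin n → ℝ := fun j => fderiv ℝ ρ P (EuclideanSpace.single j Complex.I) with hry
  have hw : ∀ j, wirtingerDeriv ρ P j = (1/2 : ℂ) * ((rx j : ℂ) - Complex.I * (ry j : ℂ)) := by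
    intro j; rfl
  set ξ' : EuclideanSpace ℂ (Fin n) := Complex.I • ξ with hξ'
  have hξ'c : ∀ j, (ξ' j).re = -(ξ j).im ∧ (ξ' j).im = (ξ j).re := by
    intro j
    constructor <;> simp [hξ', PiLp.smul_apply]
  set A : ℝ := B ξ ξ with hA
  set A' : ℝ := B ξ' ξ' with hA'
  set M : ℝ := B ξ ξ' with hM
  -- tangency consequences
  have h2 : ∑ j, (((rx j : ℂ) - Complex.I * (ry j : ℂ)) * ξ j) = 0 := by
    calc ∑ j, (((rx j : ℂ) - Complex.I * (ry j : ℂ)) * ξ j)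
        = ∑ j, 2 * (wirtingerDeriv ρ P j * ξ j) := by
          refine Finset.sum_congr rfl fun j _ => ?_
          rw [hw j]; ring
      _ = 2 * ∑ j, wirtingerDeriv ρ P j * ξ j := by rw [Finset.mul_sum]
      _ = 0 := by rw [htan, mul_zero]
  have hre : ∑ j, (rx j * (ξ j).re + ry j * (ξ j).im) = 0 := by
    have h3 := congrArg Complex.re h2
    rw [Complex.re_sum] at h3
    simp only [Complex.zero_re] at h3
    rw [← h3]
    refine Finset.sum_congr rfl fun j _ => ?_
    simp only [Complex.mul_re, Complex.sub_re, Complex.sub_im, Complex.mul_im, Complex.I_re,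
      Complex.I_im, Complex.ofReal_re, Complex.ofReal_im]
    ring
  have him : ∑ j, (rx j * (ξ j).im - ry j * (ξ j).re) = 0 := by
    have h3 := congrArg Complex.im h2
    rw [Complex.im_sum] at h3
    simp only [Complex.zero_im] at h3
    rw [← h3]
    refine Finset.sum_congr rfl fun j _ => ?_
    simp only [Complex.mul_re, Complex.sub_re, Complex.sub_im, Complex.mul_im, Complex.I_re,
      Complex.I_im, Complex.ofReal_re, Complex.ofReal_im]
    ring
  have hD1 : fderiv ℝ ρ P ξ = 0 := by
    rw [clm_decomp (fderiv ℝ ρ P) ξ]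
    rw [← hre]
    refine Finset.sum_congr rfl fun j _ => ?_
    simp [smul_eq_mul]
    ring
  have hD2 : fderiv ℝ ρ P ξ' = 0 := by
    rw [clm_decomp (fderiv ℝ ρ P) ξ']
    have : ∑ j, ((ξ' j).re • fderiv ℝ ρ P (EuclideanSpace.single j 1)
        + (ξ' j).im • fderiv ℝ ρ P (EuclideanSpace.single j Complex.I))
        = -∑ j, (rx j * (ξ j).im - ry j * (ξ j).re) := by
      rw [← Finset.sum_neg_distrib]
      refine Finset.sum_congr rfl fun j _ => ?_
      rw [(hξ'c j).1, (hξ'c j).2]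
      simp [smul_eq_mul]
      ring
    rw [this, him, neg_zero]
  -- nonvanishing Wirtinger gradient
  obtain ⟨j₀, hj₀⟩ : ∃ j, wirtingerDeriv ρ P j ≠ 0 := by
    by_contra hcon
    push_neg at hcon
    apply hgrad P hP
    have hz : ∀ j, rx j = 0 ∧ ry j = 0 := by
      intro j
      have h4 := hcon j
      rw [hw j] at h4
      have h5 : (rx j : ℂ) - Complex.I * (ry j : ℂ) = 0 := by
        field_simp at h4
        exact h4.trans (mul_zero 2)
      constructor
      · have := congrArg Complex.re h5; simpa using this
      · have := congrArg Complex.im h5; simpa using this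
    apply ContinuousLinearMap.ext
    intro v
    rw [clm_decomp]
    simp only [ContinuousLinearMap.zero_apply]
    refine Finset.sum_eq_zero fun j _ => ?_
    rw [show fderiv ℝ ρ P (EuclideanSpace.single j 1) = rx j from rfl,
      show fderiv ℝ ρ P (EuclideanSpace.single j Complex.I) = ry j from rfl,
      (hz j).1, (hz j).2]
    simp
  have hwj₀ : (rx j₀ : ℂ) - Complex.I * (ry j₀ : ℂ) ≠ 0 := by
    intro h
    apply hj₀
    rw [hw j₀, h, mul_zero]
  -- Levi identity
  have hBexp : ∀ v w : EuclideanSpace ℂ (Fin n), B v w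
      = ∑ j, ∑ k, ((v j).re * (w k).re * B (EuclideanSpace.single j 1) (EuclideanSpace.single k 1)
        + (v j).re * (w k).im * B (EuclideanSpace.single j 1) (EuclideanSpace.single k Complex.I)
        + (v j).im * (w k).re * B (EuclideanSpace.single j Complex.I) (EuclideanSpace.single k 1)
        + (v j).im * (w k).im * B (EuclideanSpace.single j Complex.I) (EuclideanSpace.single k Complex.I)) := by
    intro v w
    have h1 := congrArg (fun (L : EuclideanSpace ℂ (Fin n) →L[ℝ] ℝ) => L w) (clm_decomp B v)
    simp only at h1
    rw [h1, ContinuousLinearMap.sum_apply]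
    refine Finset.sum_congr rfl fun j _ => ?_
    rw [ContinuousLinearMap.add_apply, ContinuousLinearMap.smul_apply, ContinuousLinearMap.smul_apply,
      clm_decomp (B (EuclideanSpace.single j 1)) w, clm_decomp (B (EuclideanSpace.single j Complex.I)) w,
      Finset.smul_sum, Finset.smul_sum, ← Finset.sum_add_distrib]
    refine Finset.sum_congr rfl fun k _ => ?_
    simp only [smul_eq_mul]
    ring
  have hLevi : (∑ j, ∑ k, leviCoeff ρ P j k * ξ j * (starRingEnd ℂ) (ξ k)).re = (A + A')/4 := by
    have h14 : ((1/4 : ℂ)).re = 1/4 := by norm_num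
    have h14' : ((1/4 : ℂ)).im = 0 := by norm_num
    rw [Complex.re_sum]
    rw [hA, hA', hBexp ξ ξ, hBexp ξ' ξ', ← Finset.sum_add_distrib, Finset.sum_div]
    refine Finset.sum_congr rfl fun j _ => ?_
    rw [Complex.re_sum, ← Finset.sum_add_distrib, Finset.sum_div]
    refine Finset.sum_congr rfl fun k _ => ?_
    rw [(hξ'c j).1, (hξ'c j).2, (hξ'c k).1, (hξ'c k).2]
    simp only [leviCoeff, hHess, Complex.mul_re, Complex.mul_im, Complex.add_re, Complex.add_im,
      Complex.sub_re, Complex.sub_im, Complex.I_re, Complex.I_im, Complex.ofReal_re,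
      Complex.ofReal_im, Complex.conj_re, Complex.conj_im, h14, h14']
    ring
  have hAB : A + A' < 0 := by
    rw [hLevi] at hneg
    linarith
  -- choice of τ
  set K : ℂ := (((A - A')/2 : ℝ) : ℂ) - Complex.I * (M : ℝ) with hK
  set c : ℂ := -K / (2 * ((rx j₀ : ℂ) - Complex.I * (ry j₀ : ℂ))) with hc
  set τ : EuclideanSpace ℂ (Fin n) := c • EuclideanSpace.single j₀ (1:ℂ) with hτ
  have hKey : ∀ lam : ℂ, B (lam • ξ) (lam • ξ) + fderiv ℝ ρ P ((2*(lam*lam)) • τ)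
      = Complex.normSq lam * ((A + A')/2) := by
    intro lam
    rw [smul_decomp lam ξ, ← hξ']
    have hτ2 : (2*(lam*lam)) • τ = ((2*(lam*lam))*c) • EuclideanSpace.single j₀ (1:ℂ) := by
      rw [hτ, smul_smul]
    rw [hτ2, smul_decomp ((2*(lam*lam))*c) _, single_I]
    simp only [map_add, map_smul, ContinuousLinearMap.add_apply, ContinuousLinearMap.smul_apply,
      smul_eq_mul]
    rw [show fderiv ℝ ρ P (EuclideanSpace.single j₀ 1) = rx j₀ from rfl,
      show fderiv ℝ ρ P (EuclideanSpace.single j₀ Complex.I) = ry j₀ from rfl]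
    have hsy : B ξ' ξ = B ξ ξ' := hsymm ξ' ξ
    rw [hsy]
    have hterm : ((2*(lam*lam))*c).re * rx j₀ + ((2*(lam*lam))*c).im * ry j₀
        = (-(lam*lam) * K).re := by
      have h8 : ((2*(lam*lam))*c) * ((rx j₀:ℂ) - Complex.I * (ry j₀:ℂ)) = -(lam*lam) * K := by
        rw [hc]
        field_simp
      have h9 := congrArg Complex.re h8
      rw [← h9]
      simp only [Complex.mul_re, Complex.sub_re, Complex.sub_im, Complex.mul_im, Complex.I_re,
        Complex.I_im, Complex.ofReal_re, Complex.ofReal_im]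
      ring
    rw [hterm]
    rw [← hA, ← hA', ← hM]
    simp only [hK, Complex.mul_re, Complex.mul_im, Complex.neg_re, Complex.neg_im, Complex.sub_re,
      Complex.sub_im, Complex.ofReal_re, Complex.ofReal_im, Complex.I_re, Complex.I_im,
      Complex.normSq_apply]
    ring
  -- the second-derivative function
  set Φ : ℝ × ℂ → ℝ := fun p =>
    fderiv ℝ (fderiv ℝ ρ) (P + ((p.1:ℂ)*p.2) • ξ + (((p.1:ℂ)*p.2)*((p.1:ℂ)*p.2)) • τ)
      (p.2 • ξ + ((2*(p.1:ℂ))*(p.2*p.2)) • τ) (p.2 • ξ + ((2*(p.1:ℂ))*(p.2*p.2)) • τ)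
    + fderiv ℝ ρ (P + ((p.1:ℂ)*p.2) • ξ + (((p.1:ℂ)*p.2)*((p.1:ℂ)*p.2)) • τ)
      ((2*(p.2*p.2)) • τ) with hΦdef
  have hΦcont : Continuous Φ := by
    rw [hΦdef]
    have hcm : Continuous (fun p : ℝ × ℂ => ((p.1:ℂ) * p.2)) :=
      (Complex.continuous_ofReal.comp continuous_fst).mul continuous_snd
    have hγ : Continuous (fun p : ℝ × ℂ =>
        P + ((p.1:ℂ)*p.2) • ξ + (((p.1:ℂ)*p.2)*((p.1:ℂ)*p.2)) • τ) :=
      (continuous_const.add (hcm.smul continuous_const)).add ((hcm.mul hcm).smul continuous_const)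
    have hd : Continuous (fun p : ℝ × ℂ => p.2 • ξ + ((2*(p.1:ℂ))*(p.2*p.2)) • τ) :=
      (continuous_snd.smul continuous_const).add
        (((continuous_const.mul (Complex.continuous_ofReal.comp continuous_fst)).mul
          (continuous_snd.mul continuous_snd)).smul continuous_const)
    have hlast : Continuous (fun p : ℝ × ℂ => (2*(p.2*p.2)) • τ) :=
      ((continuous_const.mul (continuous_snd.mul continuous_snd))).smul continuous_const
    exact (((hBcont.comp hγ).clm_apply hd).clm_apply hd).add ((hf'cont.comp hγ).clm_apply hlast)
  have hΦ0 : ∀ lam ∈ sphere (0:ℂ) 1, Φ (0, lam) < 0 := by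
    intro lam hlam
    have hn1 : Complex.normSq lam = 1 := by
      have h1 : ‖lam‖ = 1 := by simpa using hlam
      have := Complex.normSq_eq_norm_sq lam
      rw [h1] at this
      simpa using this
    have h0 : Φ (0, lam) = B (lam • ξ) (lam • ξ) + fderiv ℝ ρ P ((2*(lam*lam)) • τ) := by
      rw [hΦdef]
      simp [hBdef]
    rw [h0, hKey lam, hn1]
    linarith
  have hev : ∀ᶠ t in nhds (0:ℝ), ∀ lam ∈ sphere (0:ℂ) 1, Φ (t, lam) < 0 := by
    apply (isCompact_sphere (0:ℂ) 1).eventually_forall_of_forall_eventually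
      (P := fun t lam => Φ (t, lam) < 0)
    intro lam hlam
    have hop : IsOpen {p : ℝ × ℂ | Φ p < 0} := isOpen_lt hΦcont continuous_const
    have := hop.eventually_mem (hΦ0 lam hlam)
    exact this.mono fun p hp => hp
  rw [Metric.eventually_nhds_iff] at hev
  obtain ⟨t₁, ht₁, hball⟩ := hev
  obtain ⟨rU, hrU0, hrUsub⟩ := Metric.isOpen_iff.mp hUopen P hPU
  set r : ℝ := min (δ₀/3) rU with hr
  have hr0 : 0 < r := lt_min (by linarith) hrU0
  set C : ℝ := ‖ξ‖ + ‖τ‖ + 1 with hC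
  have hC0 : 0 < C := by positivity
  set t : ℝ := min (t₁/2) (min 1 (r/(2*C))) with ht
  have ht0 : 0 < t := lt_min (by linarith) (lt_min one_pos (by positivity))
  have ht1 : t ≤ 1 := le_trans (min_le_right _ _) (min_le_left _ _)
  have htt₁ : t < t₁ := lt_of_le_of_lt (min_le_left _ _) (by linarith)
  have htC : t * C ≤ r / 2 := by
    have h5 : t ≤ r/(2*C) := le_trans (min_le_right _ _) (min_le_right _ _)
    calc t * C ≤ (r/(2*C)) * C := by nlinarith
      _ = r / 2 := by field_simp
  set ψ : ℂ → EuclideanSpace ℂ (Fin n) :=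
    fun lam => P + ((t:ℂ)*lam) • ξ + (((t:ℂ)*lam)*((t:ℂ)*lam)) • τ with hψ
  have hψP : ψ 0 = P := by simp [hψ]
  have hψcont : Continuous ψ := by
    have h6 : Continuous fun lam : ℂ => (t:ℂ)*lam := continuous_const.mul continuous_id
    exact (continuous_const.add (h6.smul continuous_const)).add ((h6.mul h6).smul continuous_const)
  have hψdiff : Differentiable ℂ ψ := by
    have h6 : Differentiable ℂ fun lam : ℂ => (t:ℂ)*lam := (differentiable_id.const_mul _)
    exact (differentiable_const _ |>.add (h6.smul_const ξ)).add ((h6.mul h6).smul_const τ)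
  have himg : ∀ lam ∈ closedBall (0:ℂ) 1, ψ lam ∈ ball P r := by
    intro lam hlam
    have hl : ‖lam‖ ≤ 1 := by simpa using hlam
    rw [mem_ball, dist_eq_norm]
    have hdd : ψ lam - P = ((t:ℂ)*lam) • ξ + (((t:ℂ)*lam)*((t:ℂ)*lam)) • τ := by
      simp only [hψ]
      abel
    rw [hdd]
    exact norm_bound ξ τ t r C ht0 ht1 hC htC hr0 lam hl
  have hdiam : diam (ψ '' closedBall 0 1) < δ₀ := by
    have hrb : r ≤ δ₀/3 := min_le_left _ _
    have h2r : 2*r < δ₀ := by linarith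
    have h0le : (0:ℝ) ≤ 2*r := by linarith
    have hb : ∀ x ∈ ψ '' closedBall (0:ℂ) 1, ∀ y ∈ ψ '' closedBall (0:ℂ) 1,
        dist x y ≤ 2*r := by
      rintro x ⟨lx, hlx, rfl⟩ y ⟨ly, hly, rfl⟩
      have h1 := himg lx hlx
      have h2 := himg ly hly
      rw [mem_ball] at h1 h2
      calc dist (ψ lx) (ψ ly) ≤ dist (ψ lx) P + dist P (ψ ly) := dist_triangle _ _ _
        _ ≤ r + r := add_le_add h1.le (by rw [dist_comm]; exact h2.le)
        _ = 2*r := by ring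
    have hd2 : diam (ψ '' closedBall (0:ℂ) 1) ≤ 2*r := diam_le_of_forall_dist_le h0le hb
    exact lt_of_le_of_lt hd2 h2r
  have hbd : ψ '' sphere 0 1 ⊆ Ω := by
    rintro x ⟨lam, hlam, rfl⟩
    have hlam1 : ‖lam‖ = 1 := by simpa using hlam
    have hcb : lam ∈ closedBall (0:ℂ) 1 := by
      simp [mem_closedBall, hlam1]
    have hU' : ψ lam ∈ U := hrUsub (ball_subset_ball (min_le_right (δ₀/3) rU) (himg lam hcb))
    apply hsub _ hU'
    -- ρ (ψ lam) < 0 via one-dimensional strict concavity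
    set g : ℝ → ℝ := fun s => ρ (P + ((s:ℂ)*lam) • ξ + (((s:ℂ)*lam)*((s:ℂ)*lam)) • τ) with hg
    set G : ℝ → ℝ := fun s => fderiv ℝ ρ (P + ((s:ℂ)*lam) • ξ + (((s:ℂ)*lam)*((s:ℂ)*lam)) • τ)
        (lam • ξ + ((2*(s:ℂ))*(lam*lam)) • τ) with hG
    have hgd : ∀ s, HasDerivAt g (G s) s := by
      intro s
      simp only [hg, hG]
      exact (hρdiff _).hasFDerivAt.comp_hasDerivAt s (curve_deriv P ξ τ lam s)
    have hGd : ∀ s, HasDerivAt G (Φ (s, lam)) s := by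
      intro s
      simp only [hG, hΦdef]
      exact ((hf'diff _).hasFDerivAt.comp_hasDerivAt s (curve_deriv P ξ τ lam s)).clm_apply
        (dir_deriv ξ τ lam s)
    have hg0 : g 0 = 0 := by
      simp [hg, hρP]
    have hG0 : G 0 = 0 := by
      have : G 0 = fderiv ℝ ρ P (lam • ξ) := by
        simp [hG]
      rw [this, smul_decomp lam ξ, ← hξ', map_add, map_smul, map_smul, hD1, hD2]
      simp
    have hΦneg : ∀ s ∈ Icc (0:ℝ) t, Φ (s, lam) < 0 := by
      intro s hs
      have hds : dist s 0 < t₁ := by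
        rw [Real.dist_eq, sub_zero, _root_.abs_of_nonneg hs.1]
        exact lt_of_le_of_lt hs.2 htt₁
      exact hball hds lam hlam
    have hGanti : StrictAntiOn G (Icc 0 t) := by
      refine strictAntiOn_of_deriv_neg (convex_Icc 0 t)
        (Continuous.continuousOn (continuous_iff_continuousAt.mpr fun s => (hGd s).continuousAt)) ?_
      intro x hx
      rw [interior_Icc] at hx
      rw [(hGd x).deriv]
      exact hΦneg x ⟨hx.1.le, hx.2.le⟩
    have hganti : StrictAntiOn g (Icc 0 t) := by
      refine strictAntiOn_of_deriv_neg (convex_Icc 0 t)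
        (Continuous.continuousOn (continuous_iff_continuousAt.mpr fun s => (hgd s).continuousAt)) ?_
      intro x hx
      rw [interior_Icc] at hx
      rw [(hgd x).deriv]
      have hGx : G x < G 0 := hGanti ⟨le_rfl, ht0.le⟩ ⟨hx.1.le, hx.2.le⟩ hx.1
      rw [hG0] at hGx
      exact hGx
    have hgt : g t < g 0 := hganti ⟨le_rfl, ht0.le⟩ ⟨ht0.le, le_rfl⟩ ht0
    have hval : ρ (ψ lam) = g t := by
      simp [hψ, hg]
    rw [hval]
    rw [hg0] at hgt
    exact hgt
  have himage := hdisc ψ hψcont.continuousOn hψdiff.differentiableOn hdiam hbd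
  exact hPnotΩ (himage ⟨0, by simp, hψP⟩)
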